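/- (Decay of the (0,0)-component of a null form in the semi-hyperboloidal frame.) Let P^{αβ} (α,β ∈ {0,1,2}) be a symmetric constant matrix satisfying the null condition: P^{αβ}ξ_αξ_β = 0 for every ξ ∈ ℝ³ with ξ₀² = ξ₁² + ξ₂². Define on K the function P̲⁰⁰(t,x) := P^{00} − 2(x^a/t)P^{0a} + (x^a x^b/t²)P^{ab}. Then for every pair of multi-indices (I,J) there exists a constant C = C(I,J,P) > 0 such that for all (t,x) ∈ K: |∂^I L^J P̲⁰⁰(t,x)| ≤ C (s/t)²; in particular |P̲⁰⁰(t,x)| ≤ C (s/t)² = C(t²−r²)/t². -/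

import Mathlib

noncomputable section

open Real MeasureTheory

abbrev Pt := ℝ × ℝ × ℝ

def tc (p : Pt) : ℝ := p.1

def rad (p : Pt) : ℝ := Real.sqrt (p.2.1 ^ 2 + p.2.2 ^ 2)

def sv (p : Pt) : ℝ := Real.sqrt (tc p ^ 2 - rad p ^ 2)

def dir (α : Fin 3) : Pt := if α = 0 then (1, 0, 0) else if α = 1 then (0, 1, 0) else (0, 0, 1)

def xc (a : Fin 2) (p : Pt) : ℝ := if a = 0 then p.2.1 else p.2.2

def pd (α : Fin 3) (u : Pt → ℝ) : Pt → ℝ := fun p => fderiv ℝ u p (dir α)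

def Lb (a : Fin 2) (u : Pt → ℝ) : Pt → ℝ := fun p => xc a p * pd 0 u p + tc p * pd a.succ u p

def pdu (a : Fin 2) (u : Pt → ℝ) : Pt → ℝ := fun p => (xc a p / tc p) * pd 0 u p + pd a.succ u p

def Box (u : Pt → ℝ) : Pt → ℝ := fun p => pd 0 (pd 0 u) p - pd 1 (pd 1 u) p - pd 2 (pd 2 u) p

def Kset : Set Pt := {p | rad p + 1 < tc p}

def Kslab (s0 s1 : ℝ) : Set Pt :=
  {p | p ∈ Kset ∧ Real.sqrt (s0 ^ 2 + rad p ^ 2) ≤ tc p ∧ tc p ≤ Real.sqrt (s1 ^ 2 + rad p ^ 2)}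

def Hyp (σ : ℝ) : Set Pt := {p | tc p = Real.sqrt (σ ^ 2 + rad p ^ 2)}

def L2H (σ : ℝ) (u : Pt → ℝ) : ℝ :=
  Real.sqrt (∫ y : ℝ × ℝ, (u (Real.sqrt (σ ^ 2 + y.1 ^ 2 + y.2 ^ 2), y)) ^ 2)

def pdI : List (Fin 3) → (Pt → ℝ) → Pt → ℝ
  | [], u => u
  | α :: I, u => pd α (pdI I u)

def LbJ : List (Fin 2) → (Pt → ℝ) → Pt → ℝ
  | [], u => u
  | a :: J, u => Lb a (LbJ J u)

/-- The `(0,0)`-component of the quadratic form `P` in the semi-hyperboloidal frame: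
`P̲⁰⁰ = P⁰⁰ − 2(x^a/t)P^{0a} + (x^a x^b/t²)P^{ab}`. -/
def nullP00 (P : Fin 3 → Fin 3 → ℝ) : Pt → ℝ :=
  fun p => P 0 0 - (∑ a : Fin 2, 2 * (xc a p / tc p) * P 0 a.succ)
    + ∑ a : Fin 2, ∑ b : Fin 2, (xc a p * xc b p / tc p ^ 2) * P a.succ b.succ

/-! The null condition forces `P⁰ᵃ = P¹² = 0` and `Pᵃᵃ = -P⁰⁰`, so `P̲⁰⁰ = P⁰⁰ (s/t)²`.
Products `(s/t)² g`, with `g` a combination of monomials `x₁ⁱ x₂ʲ / tᵏ` of degree `≤ 0`, are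
preserved by the boosts, because `s²` is boost invariant and `Lₐ t⁻² = -2 (xₐ/t) t⁻²`, while each
coordinate derivative lowers the degree of such monomials by one. Hence `∂ᴵ Lᴶ P̲⁰⁰` is `(s/t)²`
times a bounded function if `I` is empty and `O(1/t)` otherwise; and on `K`,
`s² = (t - r)(t + r) ≥ t` since `t - r > 1`, so `1/t ≤ (s/t)²`. -/

namespace NullForm

def monomial (i j k : ℕ) : Pt → ℝ := fun p => p.2.1 ^ i * p.2.2 ^ j / p.1 ^ k

lemma pd_monomial (i j k : ℕ) {p : Pt} (hp : p.1 ≠ 0) (α : Fin 3) :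
    pd α (monomial i j k) p =
      i * p.2.1 ^ (i - 1) * p.2.2 ^ j / p.1 ^ k * (dir α).2.1
        + j * p.2.1 ^ i * p.2.2 ^ (j - 1) / p.1 ^ k * (dir α).2.2
        - k * p.2.1 ^ i * p.2.2 ^ j * p.1 ^ (k - 1) / (p.1 ^ k) ^ 2 * (dir α).1 := by
  have h : HasFDerivAt (fun q : Pt => q.2.1 ^ i * q.2.2 ^ j * (q.1 ^ k)⁻¹) _ p :=
    (((hasFDerivAt_snd (𝕜 := ℝ)).fst.pow i).fun_mul ((hasFDerivAt_snd (𝕜 := ℝ)).snd.pow j)).fun_mul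
      ((hasDerivAt_inv (pow_ne_zero k hp)).comp_hasFDerivAt p ((hasFDerivAt_fst (𝕜 := ℝ)).pow k))
  have hfun : monomial i j k = fun q : Pt => q.2.1 ^ i * q.2.2 ^ j * (q.1 ^ k)⁻¹ := by
    ext q; simp [monomial, div_eq_mul_inv]
  rw [pd, hfun, h.fderiv]
  simp
  ring

lemma pd_zero_monomial (i j k : ℕ) {p : Pt} (hp : p.1 ≠ 0) :
    pd 0 (monomial i j k) p = -k * monomial i j (k + 1) p := by
  rw [pd_monomial i j k hp]
  rcases k with _ | k
  · simp [dir]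
  · simp [dir, monomial]
    field_simp
    ring

lemma pd_one_monomial (i j k : ℕ) {p : Pt} (hp : p.1 ≠ 0) :
    pd 1 (monomial (i + 1) j k) p = (i + 1) * monomial i j k p := by
  rw [pd_monomial _ _ _ hp]
  simp [dir, monomial]
  ring

lemma pd_two_monomial (i j k : ℕ) {p : Pt} (hp : p.1 ≠ 0) :
    pd 2 (monomial i (j + 1) k) p = (j + 1) * monomial i j k p := by
  rw [pd_monomial _ _ _ hp]
  simp [dir, monomial]
  ring

lemma pd_one_monomial_zero (j k : ℕ) {p : Pt} (hp : p.1 ≠ 0) :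
    pd 1 (monomial 0 j k) p = 0 := by
  simp [pd_monomial _ _ _ hp, dir]

lemma pd_two_monomial_zero (i k : ℕ) {p : Pt} (hp : p.1 ≠ 0) :
    pd 2 (monomial i 0 k) p = 0 := by
  simp [pd_monomial _ _ _ hp, dir]

/-- On `{t ≠ 0}`, `h` agrees with a combination of monomials `x₁ⁱ x₂ʲ / tᵏ` with `i + j + n ≤ k`. -/
inductive Decays : ℕ → (Pt → ℝ) → Prop
  | zero (n : ℕ) : Decays n fun _ => 0
  | add {n : ℕ} {h₁ h₂ : Pt → ℝ} : Decays n h₁ → Decays n h₂ → Decays n fun p => h₁ p + h₂ p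
  | const_mul {n : ℕ} {h : Pt → ℝ} (c : ℝ) : Decays n h → Decays n fun p => c * h p
  | monomial {n : ℕ} (i j k : ℕ) : i + j + n ≤ k → Decays n (monomial i j k)
  | congr {n : ℕ} {h h' : Pt → ℝ} : Decays n h → (∀ p : Pt, p.1 ≠ 0 → h p = h' p) → Decays n h'

lemma isOpen_fst_ne_zero : IsOpen {p : Pt | p.1 ≠ 0} := isOpen_ne.preimage continuous_fst

lemma pd_congr {h h' : Pt → ℝ} (he : ∀ q : Pt, q.1 ≠ 0 → h q = h' q) {p : Pt} (hp : p.1 ≠ 0)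
    (α : Fin 3) : pd α h p = pd α h' p := by
  rw [pd, pd, Filter.EventuallyEq.fderiv_eq
    (Filter.eventuallyEq_of_mem (isOpen_fst_ne_zero.mem_nhds hp) he)]

namespace Decays

lemma differentiableAt {n : ℕ} {h : Pt → ℝ} (hh : Decays n h) {p : Pt} (hp : p.1 ≠ 0) :
    DifferentiableAt ℝ h p := by
  induction hh generalizing p with
  | zero => exact differentiableAt_const 0
  | add _ _ ih₁ ih₂ => exact (ih₁ hp).add (ih₂ hp)
  | const_mul c _ ih => exact (ih hp).const_mul c
  | monomial i j k _ =>
    unfold NullForm.monomial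
    fun_prop (disch := exact pow_ne_zero k hp)
  | congr _ he ih =>
    exact (ih hp).congr_of_eventuallyEq
      (Filter.eventuallyEq_of_mem (isOpen_fst_ne_zero.mem_nhds hp) fun q hq => (he q hq).symm)

lemma pd_monomial {n i j k : ℕ} (hk : i + j + n ≤ k) (α : Fin 3) :
    Decays (n + 1) (pd α (NullForm.monomial i j k)) := by
  fin_cases α
  · exact .congr (.const_mul (-k) (.monomial i j (k + 1) (by omega)))
      fun p hp => (pd_zero_monomial i j k hp).symm
  · rcases i with _ | i
    · exact .congr (.zero _) fun p hp => (pd_one_monomial_zero j k hp).symm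
    · exact .congr (.const_mul (i + 1) (.monomial i j k (by omega)))
        fun p hp => (pd_one_monomial i j k hp).symm
  · rcases j with _ | j
    · exact .congr (.zero _) fun p hp => (pd_two_monomial_zero i k hp).symm
    · exact .congr (.const_mul (j + 1) (.monomial i j k (by omega)))
        fun p hp => (pd_two_monomial i j k hp).symm

lemma pd {n : ℕ} {h : Pt → ℝ} (hh : Decays n h) (α : Fin 3) : Decays (n + 1) (pd α h) := by
  induction hh with
  | zero => exact .congr (.zero _) fun p _ => by simp [_root_.pd]
  | add hh₁ hh₂ ih₁ ih₂ =>
    refine .congr (.add ih₁ ih₂) fun p hp => ?_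
    simp [_root_.pd, fderiv_fun_add (hh₁.differentiableAt hp) (hh₂.differentiableAt hp)]
  | const_mul c hh ih =>
    refine .congr (.const_mul c ih) fun p hp => ?_
    simp [_root_.pd, fderiv_const_mul (hh.differentiableAt hp)]
  | monomial i j k hk => exact pd_monomial hk α
  | congr _ he ih => exact .congr ih fun p hp => pd_congr he hp α

lemma mul_of_forall_monomial {m n : ℕ} {φ h : Pt → ℝ}
    (hφ : ∀ i j k : ℕ, i + j + n ≤ k → Decays m fun p => φ p * NullForm.monomial i j k p)
    (hh : Decays n h) : Decays m fun p => φ p * h p := by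
  induction hh with
  | zero => exact .congr (.zero m) fun p _ => by simp
  | add _ _ ih₁ ih₂ => exact .congr (.add ih₁ ih₂) fun p _ => by ring
  | const_mul c _ ih => exact .congr (.const_mul c ih) fun p _ => by ring
  | monomial i j k hk => exact hφ i j k hk
  | congr _ he ih => exact .congr ih fun p hp => by rw [he p hp]

lemma monomial_mul {m n i₀ j₀ k₀ : ℕ} (hk₀ : i₀ + j₀ + m ≤ k₀) {h : Pt → ℝ} (hh : Decays n h) :
    Decays (m + n) fun p => NullForm.monomial i₀ j₀ k₀ p * h p := by
  refine mul_of_forall_monomial (fun i j k hk => ?_) hh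
  refine .congr (.monomial (i₀ + i) (j₀ + j) (k₀ + k) (by omega)) fun p _ => ?_
  simp only [NullForm.monomial, pow_add]
  ring

lemma mul {m n : ℕ} {φ h : Pt → ℝ} (hφ : Decays m φ) (hh : Decays n h) :
    Decays (m + n) fun p => φ p * h p :=
  mul_of_forall_monomial
    (fun _ _ _ hk => .congr (add_comm n m ▸ monomial_mul hk hφ) fun _ _ => mul_comm _ _) hh

lemma xc_mul {n : ℕ} {h : Pt → ℝ} (a : Fin 2) (hh : Decays (n + 1) h) :
    Decays n fun p => xc a p * h p := by
  refine mul_of_forall_monomial (fun i j k hk => ?_) hh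
  fin_cases a
  · refine .congr (.monomial (i + 1) j k (by omega)) fun p _ => ?_
    simp [xc, NullForm.monomial]
    ring
  · refine .congr (.monomial i (j + 1) k (by omega)) fun p _ => ?_
    simp [xc, NullForm.monomial]
    ring

lemma tc_mul {n : ℕ} {h : Pt → ℝ} (hh : Decays (n + 1) h) : Decays n fun p => tc p * h p := by
  refine mul_of_forall_monomial (fun i j k hk => ?_) hh
  obtain ⟨k, rfl⟩ : ∃ k', k = k' + 1 := ⟨k - 1, by omega⟩
  refine .congr (.monomial i j k (by omega)) fun p _ => ?_
  simp only [NullForm.monomial, tc, pow_succ]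
  field_simp

lemma lb {n : ℕ} {h : Pt → ℝ} (hh : Decays n h) (a : Fin 2) : Decays n (Lb a h) :=
  .add ((hh.pd 0).xc_mul a) (hh.pd a.succ).tc_mul

lemma pdI {n : ℕ} {h : Pt → ℝ} (hh : Decays n h) (I : List (Fin 3)) :
    Decays (n + I.length) (pdI I h) := by
  induction I with
  | nil => exact hh
  | cons α I ih => exact ih.pd α

end Decays

lemma abs_monomial_le {i j k n : ℕ} (hk : i + j + n ≤ k) {p : Pt} (ht : 1 ≤ p.1)
    (hx₁ : |p.2.1| ≤ p.1) (hx₂ : |p.2.2| ≤ p.1) : |monomial i j k p| ≤ 1 / p.1 ^ n := by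
  have ht₀ : 0 < p.1 := one_pos.trans_le ht
  rw [monomial, abs_div, abs_mul, abs_pow, abs_pow, abs_pow, abs_of_pos ht₀,
    div_le_div_iff₀ (by positivity) (by positivity), one_mul]
  calc |p.2.1| ^ i * |p.2.2| ^ j * p.1 ^ n ≤ p.1 ^ i * p.1 ^ j * p.1 ^ n := by gcongr
    _ = p.1 ^ (i + j + n) := by rw [pow_add, pow_add]
    _ ≤ p.1 ^ k := pow_le_pow_right₀ ht hk

lemma one_lt_of_mem_Kset {p : Pt} (hp : p ∈ Kset) : 1 < p.1 := by
  have : rad p + 1 < p.1 := hp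
  linarith [show 0 ≤ rad p from Real.sqrt_nonneg _]

lemma ne_zero_of_mem_Kset {p : Pt} (hp : p ∈ Kset) : p.1 ≠ 0 :=
  (one_pos.trans (one_lt_of_mem_Kset hp)).ne'

lemma abs_fst_le_of_mem_Kset {p : Pt} (hp : p ∈ Kset) : |p.2.1| ≤ p.1 := by
  have : rad p + 1 < p.1 := hp
  have : |p.2.1| ≤ rad p := Real.abs_le_sqrt (le_add_of_nonneg_right (sq_nonneg _))
  linarith

lemma abs_snd_le_of_mem_Kset {p : Pt} (hp : p ∈ Kset) : |p.2.2| ≤ p.1 := by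
  have : rad p + 1 < p.1 := hp
  have : |p.2.2| ≤ rad p := Real.abs_le_sqrt (le_add_of_nonneg_left (sq_nonneg _))
  linarith

lemma Decays.exists_bound {n : ℕ} {h : Pt → ℝ} (hh : Decays n h) :
    ∃ C, 0 ≤ C ∧ ∀ p ∈ Kset, |h p| ≤ C / p.1 ^ n := by
  induction hh with
  | zero => exact ⟨0, le_rfl, fun p _ => by simp⟩
  | add _ _ ih₁ ih₂ =>
    obtain ⟨C₁, hC₁, hb₁⟩ := ih₁
    obtain ⟨C₂, hC₂, hb₂⟩ := ih₂
    refine ⟨C₁ + C₂, add_nonneg hC₁ hC₂, fun p hp => ?_⟩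
    rw [add_div]
    exact (abs_add_le _ _).trans (add_le_add (hb₁ p hp) (hb₂ p hp))
  | const_mul c _ ih =>
    obtain ⟨C, hC, hb⟩ := ih
    refine ⟨|c| * C, by positivity, fun p hp => ?_⟩
    rw [abs_mul, mul_div_assoc]
    exact mul_le_mul_of_nonneg_left (hb p hp) (abs_nonneg c)
  | monomial i j k hk =>
    exact ⟨1, zero_le_one, fun p hp => abs_monomial_le hk (one_lt_of_mem_Kset hp).le
      (abs_fst_le_of_mem_Kset hp) (abs_snd_le_of_mem_Kset hp)⟩
  | congr _ he ih =>
    obtain ⟨C, hC, hb⟩ := ih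
    exact ⟨C, hC, fun p hp => he p (ne_zero_of_mem_Kset hp) ▸ hb p hp⟩

/-- The weight `(s/t)²`. -/
def stRatioSq : Pt → ℝ := fun p => 1 - (p.2.1 ^ 2 + p.2.2 ^ 2) / p.1 ^ 2

lemma decays_stRatioSq : Decays 0 stRatioSq :=
  .congr (.add (.add (.monomial 0 0 0 le_rfl) (.const_mul (-1) (.monomial 2 0 2 le_rfl)))
      (.const_mul (-1) (.monomial 0 2 2 le_rfl)))
    fun p _ => by simp only [monomial, stRatioSq]; ring

lemma pd_stRatioSq {p : Pt} (hp : p.1 ≠ 0) (α : Fin 3) :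
    pd α stRatioSq p = 2 * (p.2.1 ^ 2 + p.2.2 ^ 2) / p.1 ^ 3 * (dir α).1
      - 2 * p.2.1 / p.1 ^ 2 * (dir α).2.1 - 2 * p.2.2 / p.1 ^ 2 * (dir α).2.2 := by
  have h : HasFDerivAt (fun q : Pt => 1 - (q.2.1 ^ 2 + q.2.2 ^ 2) * (q.1 ^ 2)⁻¹) _ p :=
    (hasFDerivAt_const 1 p).sub ((((hasFDerivAt_snd (𝕜 := ℝ)).fst.pow 2).add
      ((hasFDerivAt_snd (𝕜 := ℝ)).snd.pow 2)).fun_mul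
      ((hasDerivAt_inv (pow_ne_zero 2 hp)).comp_hasFDerivAt p ((hasFDerivAt_fst (𝕜 := ℝ)).pow 2)))
  have hfun : stRatioSq = fun q : Pt => 1 - (q.2.1 ^ 2 + q.2.2 ^ 2) * (q.1 ^ 2)⁻¹ := by
    ext q; simp [stRatioSq, div_eq_mul_inv]
  rw [pd, hfun, h.fderiv]
  simp
  field_simp
  ring

lemma lb_stRatioSq (a : Fin 2) {p : Pt} (hp : p.1 ≠ 0) :
    Lb a stRatioSq p = -2 * (xc a p / tc p) * stRatioSq p := by
  simp only [Lb, pd_stRatioSq hp]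
  fin_cases a <;> simp [xc, tc, dir, stRatioSq] <;> field_simp <;> ring

lemma lb_mul {u v : Pt → ℝ} {p : Pt} (hu : DifferentiableAt ℝ u p) (hv : DifferentiableAt ℝ v p)
    (a : Fin 2) : Lb a (fun q => u q * v q) p = u p * Lb a v p + v p * Lb a u p := by
  simp only [Lb, pd, fderiv_fun_mul hu hv, add_apply, smul_apply, smul_eq_mul]
  ring

def IsStRatioSqMul (h : Pt → ℝ) : Prop :=
  ∃ g : Pt → ℝ, Decays 0 g ∧ ∀ p : Pt, p.1 ≠ 0 → h p = stRatioSq p * g p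

namespace IsStRatioSqMul

lemma decays {h : Pt → ℝ} (hh : IsStRatioSqMul h) : Decays 0 h := by
  obtain ⟨g, hg, he⟩ := hh
  exact .congr (decays_stRatioSq.mul hg) fun p hp => (he p hp).symm

lemma lb {h : Pt → ℝ} (hh : IsStRatioSqMul h) (a : Fin 2) : IsStRatioSqMul (Lb a h) := by
  obtain ⟨g, hg, he⟩ := hh
  have hx : Decays 0 fun p => -2 * (xc a p / tc p) * g p := by
    refine .congr (.const_mul (-2) (Decays.mul (m := 0) (φ := fun p => xc a p / tc p) ?_ hg))
      fun p _ => by ring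
    fin_cases a
    · exact .congr (.monomial 1 0 1 le_rfl) fun p _ => by simp [monomial, xc, tc]
    · exact .congr (.monomial 0 1 1 le_rfl) fun p _ => by simp [monomial, xc, tc]
  refine ⟨fun p => Lb a g p + -2 * (xc a p / tc p) * g p, .add (hg.lb a) hx, fun p hp => ?_⟩
  have hLb : Lb a h p = Lb a (fun q => stRatioSq q * g q) p := by
    simp only [Lb, pd_congr he hp]
  rw [hLb, lb_mul (decays_stRatioSq.differentiableAt hp) (hg.differentiableAt hp),
    lb_stRatioSq a hp]
  ring

lemma lbJ {h : Pt → ℝ} (hh : IsStRatioSqMul h) (J : List (Fin 2)) :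
    IsStRatioSqMul (LbJ J h) := by
  induction J with
  | nil => exact hh
  | cons a J ih => exact ih.lb a

end IsStRatioSqMul

lemma stRatioSq_eq {p : Pt} (hp : p.1 ≠ 0) : stRatioSq p = (tc p ^ 2 - rad p ^ 2) / tc p ^ 2 := by
  rw [rad, Real.sq_sqrt (by positivity), stRatioSq, tc]
  field_simp

lemma stRatioSq_eq_sq_sv_div_tc {p : Pt} (hp : p ∈ Kset) : stRatioSq p = (sv p / tc p) ^ 2 := by
  have : rad p + 1 < tc p := hp
  have : 0 ≤ rad p := Real.sqrt_nonneg _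
  rw [div_pow, sv, Real.sq_sqrt (by nlinarith), stRatioSq_eq (ne_zero_of_mem_Kset hp)]

lemma stRatioSq_nonneg {p : Pt} (hp : p ∈ Kset) : 0 ≤ stRatioSq p := by
  rw [stRatioSq_eq_sq_sv_div_tc hp]
  positivity

lemma inv_tc_le_stRatioSq {p : Pt} (hp : p ∈ Kset) : (tc p)⁻¹ ≤ stRatioSq p := by
  have hK : rad p + 1 < tc p := hp
  have hr : 0 ≤ rad p := Real.sqrt_nonneg _
  have ht : 0 < tc p := by linarith
  rw [stRatioSq_eq ht.ne', inv_eq_one_div, div_le_div_iff₀ ht (by positivity)]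
  nlinarith [mul_le_mul (le_of_lt (sub_pos.2 hK)) (le_add_of_nonneg_right hr) ht.le (by linarith)]

lemma IsStRatioSqMul.exists_bound_pdI {h : Pt → ℝ} (hh : IsStRatioSqMul h)
    (I : List (Fin 3)) : ∃ C > 0, ∀ p ∈ Kset, |pdI I h p| ≤ C * stRatioSq p := by
  cases I with
  | nil =>
    obtain ⟨g, hg, he⟩ := hh
    obtain ⟨C, hC, hb⟩ := hg.exists_bound
    refine ⟨C + 1, by positivity, fun p hp => ?_⟩
    rw [pdI, he p (ne_zero_of_mem_Kset hp), abs_mul, abs_of_nonneg (stRatioSq_nonneg hp), mul_comm]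
    gcongr
    · exact stRatioSq_nonneg hp
    · simpa using (hb p hp).trans (le_add_of_nonneg_right zero_le_one)
  | cons α I =>
    obtain ⟨C, hC, hb⟩ := (hh.decays.pdI (α :: I)).exists_bound
    refine ⟨C + 1, by positivity, fun p hp => ?_⟩
    have ht : 1 ≤ p.1 := (one_lt_of_mem_Kset hp).le
    calc |pdI (α :: I) h p| ≤ C / p.1 ^ (0 + (α :: I).length) := hb p hp
      _ ≤ (C + 1) / p.1 := by
        gcongr
        · linarith
        · exact le_self_pow₀ ht (by simp)
      _ ≤ (C + 1) * stRatioSq p := by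
        rw [div_eq_mul_inv]
        exact mul_le_mul_of_nonneg_left (inv_tc_le_stRatioSq hp) (by positivity)

lemma null_condition_coeffs {P : Fin 3 → Fin 3 → ℝ} (hPsymm : ∀ α β, P α β = P β α)
    (hPnull : ∀ ξ : Fin 3 → ℝ, ξ 0 ^ 2 = ξ 1 ^ 2 + ξ 2 ^ 2 →
      ∑ α : Fin 3, ∑ β : Fin 3, P α β * ξ α * ξ β = 0) :
    P 0 1 = 0 ∧ P 0 2 = 0 ∧ P 1 2 = 0 ∧ P 1 1 = -P 0 0 ∧ P 2 2 = -P 0 0 := by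
  have null (a b c : ℝ) (h : a ^ 2 = b ^ 2 + c ^ 2) :=
    hPnull ![a, b, c] (by simpa using h)
  have h₁ := null 1 1 0 (by norm_num)
  have h₂ := null 1 (-1) 0 (by norm_num)
  have h₃ := null 1 0 1 (by norm_num)
  have h₄ := null 1 0 (-1) (by norm_num)
  have h₅ := null 5 3 4 (by norm_num)
  simp only [Fin.sum_univ_three, Matrix.cons_val_zero, Matrix.cons_val_one, Matrix.cons_val_two,
    Matrix.head_cons, Matrix.tail_cons] at h₁ h₂ h₃ h₄ h₅
  rw [hPsymm 1 0, hPsymm 2 0, hPsymm 2 1] at *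
  refine ⟨?_, ?_, ?_, ?_, ?_⟩ <;> linarith

lemma nullP00_eq_mul_stRatioSq {P : Fin 3 → Fin 3 → ℝ} (hPsymm : ∀ α β, P α β = P β α)
    (hPnull : ∀ ξ : Fin 3 → ℝ, ξ 0 ^ 2 = ξ 1 ^ 2 + ξ 2 ^ 2 →
      ∑ α : Fin 3, ∑ β : Fin 3, P α β * ξ α * ξ β = 0) {p : Pt} (hp : p.1 ≠ 0) :
    nullP00 P p = P 0 0 * stRatioSq p := by
  obtain ⟨h01, h02, h12, h11, h22⟩ := null_condition_coeffs hPsymm hPnull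
  simp only [nullP00, Fin.sum_univ_two, Fin.succ_zero_eq_one, Fin.succ_one_eq_two, h01, h02,
    h11, h22, hPsymm 2 1, h12, xc, tc, stRatioSq, one_ne_zero, if_false, if_true]
  field_simp
  ring

lemma isStRatioSqMul_nullP00 {P : Fin 3 → Fin 3 → ℝ} (hPsymm : ∀ α β, P α β = P β α)
    (hPnull : ∀ ξ : Fin 3 → ℝ, ξ 0 ^ 2 = ξ 1 ^ 2 + ξ 2 ^ 2 →
      ∑ α : Fin 3, ∑ β : Fin 3, P α β * ξ α * ξ β = 0) :
    IsStRatioSqMul (nullP00 P) :=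
  ⟨fun _ => P 0 0, .congr (.const_mul (P 0 0) (.monomial 0 0 0 le_rfl)) fun _ _ => by
    simp [monomial], fun _ hp => (nullP00_eq_mul_stRatioSq hPsymm hPnull hp).trans (mul_comm _ _)⟩

end NullForm

open NullForm

/-- Decay of the `(0,0)`-component of a null form in the
semi-hyperboloidal frame. -/
theorem null_form_decay (P : Fin 3 → Fin 3 → ℝ) (hPsymm : ∀ α β, P α β = P β α)
    (hPnull : ∀ ξ : Fin 3 → ℝ, ξ 0 ^ 2 = ξ 1 ^ 2 + ξ 2 ^ 2 →
      ∑ α : Fin 3, ∑ β : Fin 3, P α β * ξ α * ξ β = 0)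
    (I : List (Fin 3)) (J : List (Fin 2)) :
    ∃ C > 0,
      (∀ p ∈ Kset, |pdI I (LbJ J (nullP00 P)) p| ≤ C * (sv p / tc p) ^ 2) ∧
      (∀ p ∈ Kset, |nullP00 P p| ≤ C * ((tc p ^ 2 - rad p ^ 2) / tc p ^ 2)) := by
  have hP := isStRatioSqMul_nullP00 hPsymm hPnull
  obtain ⟨C₁, hC₁, hb₁⟩ := (hP.lbJ J).exists_bound_pdI I
  obtain ⟨C₀, -, hb₀⟩ := hP.exists_bound_pdI []
  have hmax {C : ℝ} {p : Pt} (hp : p ∈ Kset) (hC : C ≤ max C₁ C₀) :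
      C * stRatioSq p ≤ max C₁ C₀ * stRatioSq p :=
    mul_le_mul_of_nonneg_right hC (stRatioSq_nonneg hp)
  refine ⟨max C₁ C₀, lt_max_of_lt_left hC₁, fun p hp => ?_, fun p hp => ?_⟩
  · rw [← stRatioSq_eq_sq_sv_div_tc hp]
    exact (hb₁ p hp).trans (hmax hp (le_max_left _ _))
  · rw [← stRatioSq_eq (ne_zero_of_mem_Kset hp)]
    exact (hb₀ p hp).trans (hmax hp (le_max_right _ _))
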